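/- arXiv:2402.07798 — 2 statements merged into one kernel-verified Lean document; each statement's English description precedes it below -/
import Mathlib

section
/- For every integer n ≥ 2, the reflection length of λ_n in the affine symmetric group W̃_n equals 2n−2: λ_n can be written as a product of 2n−2 affine reflections, and cannot be written as a product of fewer than 2n−2 affine reflections. -/
/-- The affine reflection `((i,j))` of the affine symmetric group `W̃ₙ`, as a function
`ℤ → ℤ`: it interchanges `i + k*n` and `j + k*n` for every `k ∈ ℤ` and fixes all
integers not congruent to `i` or `j` mod `n`. -/
def affRefl (n : ℕ) (i j : ℤ) : ℤ → ℤ := fun k =>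
  if (k - i) % (n : ℤ) = 0 then k - i + j
  else if (k - j) % (n : ℤ) = 0 then k - j + i
  else k

/-- `t : ℤ → ℤ` is an affine reflection of `W̃ₙ`. -/
def IsAffRefl (n : ℕ) (t : ℤ → ℤ) : Prop :=
  ∃ i j : ℤ, (i - j) % (n : ℤ) ≠ 0 ∧ t = affRefl n i j

/-- The simple reflection `sⱼ = ((j, j+1))`. -/
def simpleRefl (n : ℕ) (j : ℤ) : ℤ → ℤ := affRefl n j (j + 1)

/-- The translation `λₙ`: it sends `k ≡ 0 (mod n)` to `k - n(n-1)` and all other `k`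
to `k + n`. -/
def lam (n : ℕ) : ℤ → ℤ := fun k =>
  if k % (n : ℤ) = 0 then k - (n : ℤ) * ((n : ℤ) - 1) else k + (n : ℤ)

/-- The product `r₁ r₂ ⋯ rₘ` of a list of elements, with `(w·v)(k) = w(v(k))`. -/
def listProd (l : List (ℤ → ℤ)) : ℤ → ℤ := l.foldr (· ∘ ·) id

/-- `l` is a factorization of `λₙ` into affine reflections. -/
def IsFactorization (n : ℕ) (l : List (ℤ → ℤ)) : Prop :=
  (∀ t ∈ l, IsAffRefl n t) ∧ listProd l = lam n

/-- A tree-like factorization of `λₙ`: a factorization `[r₁, …, r_{2n-2}]` into `2n-2`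
affine reflections such that there are integers `a₀, …, a_{2n-2}` and `b₁, …, b_{2n-2}`
with `r_k = ((a_{k-1}, b_k))`, `a_{k-1} < b_k` and `a_k ≡ b_k (mod n)`
(0-based: `r` at index `k` equals `((a k, b (k+1)))`). -/
def IsTreeLike (n : ℕ) (l : List (ℤ → ℤ)) : Prop :=
  IsFactorization n l ∧ l.length = 2 * n - 2 ∧
  ∃ a b : ℕ → ℤ, ∀ k : ℕ, ∀ h : k < l.length,
    l.get ⟨k, h⟩ = affRefl n (a k) (b (k + 1)) ∧
    a k < b (k + 1) ∧ (a (k + 1) - b (k + 1)) % (n : ℤ) = 0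

/-- `a₀ < a₁ < ⋯` is a strictly increasing endpoint sequence of the factorization `l`:
`r_ℓ = ((a_{ℓ-1}, a_ℓ))` (0-based: `r` at index `k` is `((a k, a (k+1)))`). -/
def EndSeq (n : ℕ) (l : List (ℤ → ℤ)) (a : ℕ → ℤ) : Prop :=
  ∀ k : ℕ, ∀ h : k < l.length,
    a k < a (k + 1) ∧ l.get ⟨k, h⟩ = affRefl n (a k) (a (k + 1))

/-- The representative of `x` modulo `n` lying in `{1, …, n}`. -/
def resOne (n : ℕ) (x : ℤ) : ℤ := if x % (n : ℤ) = 0 then (n : ℤ) else x % (n : ℤ)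

/-- `nb_k(r)` for the endpoint sequence `a` of a tree-like factorization of `λₙ`:
the list of the residues `a_i mod n` (representatives in `{1, …, n}`), in increasing
order of the index `i ∈ {1, …, 2n-2}`, over those `i` with `a_{i-1} ≡ k (mod n)`
(0-based: indices `i < 2n-2` with `a i ≡ k`, recording the residue of `a (i+1)`). -/
def nb (n : ℕ) (a : ℕ → ℤ) (k : ℤ) : List ℤ :=
  ((List.range (2 * n - 2)).filter (fun i => decide ((a i - k) % (n : ℤ) = 0))).map
    (fun i => resOne n (a (i + 1)))

/-- A cyclic factorization of `λₙ`: a tree-like factorization such that, for an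
endpoint sequence `a` as above, (i) `nb_n` is strictly increasing; and (ii) for each
`k ∈ {1, …, n-1}`, writing `nb_k = [c₁, …, c_ℓ]`, there is `j ∈ {1, …, ℓ}` with
`c_j < c_{j+1} < ⋯ < c_{ℓ-1} < k < c₁ < ⋯ < c_{j-1}`. -/
def IsCyclicFact (n : ℕ) (l : List (ℤ → ℤ)) : Prop :=
  IsTreeLike n l ∧
  ∃ a : ℕ → ℤ, EndSeq n l a ∧
    List.Chain' (· < ·) (nb n a (n : ℤ)) ∧
    (∀ k : ℤ, 1 ≤ k → k ≤ (n : ℤ) - 1 →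
      ∃ m : ℕ, m < (nb n a k).length ∧
        List.Chain' (· < ·)
          ((nb n a k).dropLast.drop m ++ k :: (nb n a k).dropLast.take m))

/-- The letter at (0-based) position `j` of the subword of `λ̂ₙ` with skip set `S`:
the identity `e` if `j` is a skip, and the simple reflection `sⱼ` otherwise. -/
def letterAt (n : ℕ) (S : Finset ℕ) (j : ℕ) : ℤ → ℤ :=
  if j ∈ S then id else simpleRefl n (j : ℤ)

/-- The subword of the word `λ̂ₙ = [s₀, s₁, …, s_{n-1}]^{n-1}` (of length `N = n(n-1)`,
whose letter at 0-based position `j` is `s_j`) with skip set `S`. -/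
def subword (n : ℕ) (S : Finset ℕ) : List (ℤ → ℤ) :=
  (List.range (n * (n - 1))).map (letterAt n S)

/-- `u_{(j)}`: the product of the first `j` letters of the subword. -/
def uPref (n : ℕ) (S : Finset ℕ) (j : ℕ) : ℤ → ℤ :=
  listProd ((subword n S).take j)

/-- `u_{(j)}⁻¹`: since every letter is an involution, the inverse of `u_{(j)}` is the
product of the first `j` letters in reverse order. -/
def uPrefInv (n : ℕ) (S : Finset ℕ) (j : ℕ) : ℤ → ℤ :=
  listProd (((subword n S).take j).reverse)

/-- The element `t_{j+1} = u_{(j)} s_j u_{(j)}⁻¹` of `inv(u)` (0-based `j`). -/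
def conjAt (n : ℕ) (S : Finset ℕ) (j : ℕ) : ℤ → ℤ :=
  uPref n S j ∘ simpleRefl n (j : ℤ) ∘ uPrefInv n S j

/-- The (0-based) skip indices of the subword, in increasing order. -/
def skipIdx (S : Finset ℕ) : List ℕ := S.sort (· ≤ ·)

/-- The sequence `r^u` of skip reflections of the subword with skip set `S`. -/
def skipRefls (n : ℕ) (S : Finset ℕ) : List (ℤ → ℤ) :=
  (skipIdx S).map (conjAt n S)

/-- The subword with skip set `S` is a member of `S_n`: it is a subword of `λ̂ₙ`
with exactly `2n-2` skips whose product is the identity. -/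
def SnMem (n : ℕ) (S : Finset ℕ) : Prop :=
  S ⊆ Finset.range (n * (n - 1)) ∧ S.card = 2 * n - 2 ∧ listProd (subword n S) = id

/-- The product of the suffix `r_{i+1} ⋯ r_m` (0-based: drops the first `i` factors). -/
def suffixProd (l : List (ℤ → ℤ)) (i : ℕ) : ℤ → ℤ := listProd (l.drop i)

/-- The cyclic segment product `u_{a+1} u_{a+2} ⋯ u_{a+L}` of the subword with skip set
`S` (0-based starting position `a`, indices taken modulo `N = n(n-1)`). -/
def segProd (n : ℕ) (S : Finset ℕ) (a L : ℕ) : ℤ → ℤ :=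
  listProd ((List.range L).map (fun t => letterAt n S ((a + t) % (n * (n - 1)))))

/-!
Upper bound: for `x ≢ 0 (mod n)` the product `((x + n, 0)) ((x, 0))` is the translation moving
the class of `x` up by `n` and the class of `0` down by `n`, and `λₙ` is the product of these
`n - 1` translations.

Lower bound: reduce a factorization `λₙ = ((i₁, j₁)) ⋯ ((iₘ, jₘ))` modulo `n`. The
transpositions `(īₖ j̄ₖ)` multiply to the identity, and the displacement vector of `λₙ` forces
their roots `e_{īₖ} - e_{j̄ₖ}` to span a space of dimension `n - 1`. A product of
transpositions equal to the identity has at least twice as many factors as the dimension of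
the span of its roots.
-/
open Module Submodule

section PermRank

lemma finrank_span_singleton_le_one {K V : Type*} [DivisionRing K] [AddCommGroup V] [Module K V]
    (v : V) : finrank K (K ∙ v) ≤ 1 := by
  simpa using finrank_span_le_card ({v} : Set V)

variable (K : Type*) [Field K] {α : Type*}

def permDiff (g : Equiv.Perm α) : (α → K) →ₗ[K] (α → K) :=
  LinearMap.funLeft K K g - LinearMap.id

/-- `permRank g` is `card α` minus the number of cycles of `g`. -/
noncomputable def permRank (g : Equiv.Perm α) : ℕ :=
  finrank K (LinearMap.range (permDiff K g))

def root [DecidableEq α] (p : α × α) : α → K := Pi.single p.1 1 - Pi.single p.2 1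

def rootSpan [DecidableEq α] (l : List (α × α)) : Submodule K (α → K) :=
  span K {v | ∃ p ∈ l, root K p = v}

def swapProd [DecidableEq α] (l : List (α × α)) : Equiv.Perm α :=
  (l.map fun p => Equiv.swap p.1 p.2).prod

variable {K}

lemma permDiff_apply (g : Equiv.Perm α) (x : α → K) (u : α) :
    permDiff K g x u = x (g u) - x u := rfl

lemma permDiff_mul (g h : Equiv.Perm α) :
    permDiff K (g * h) = (LinearMap.funLeft K K h).comp (permDiff K g) + permDiff K h := by
  ext x u
  simp [permDiff_apply, LinearMap.funLeft_apply]

lemma permDiff_swap [DecidableEq α] (a b : α) (x : α → K) :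
    permDiff K (Equiv.swap a b) x = (x b - x a) • root K (a, b) := by
  funext u
  rcases eq_or_ne u a with rfl | hua
  · rcases eq_or_ne u b with rfl | hub
    · simp [permDiff_apply]
    · simp [permDiff_apply, root, hub.symm]
  rcases eq_or_ne u b with rfl | hub
  · simp [permDiff_apply, root, hua]
  · simp [permDiff_apply, root, hua, hub, Equiv.swap_apply_of_ne_of_ne]

lemma permDiff_one : permDiff K (1 : Equiv.Perm α) = 0 := by
  ext; simp [permDiff_apply]

lemma permRank_one : permRank K (1 : Equiv.Perm α) = 0 := by
  rw [permRank, permDiff_one, LinearMap.range_zero, finrank_bot]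

lemma range_permDiff_mul_swap_le [DecidableEq α] (g : Equiv.Perm α) (a b : α) :
    LinearMap.range (permDiff K (g * Equiv.swap a b)) ≤
      (LinearMap.range (permDiff K g)).map (LinearMap.funLeft K K (Equiv.swap a b)) ⊔
        K ∙ root K (a, b) := by
  rintro _ ⟨x, rfl⟩
  rw [permDiff_mul, LinearMap.add_apply, permDiff_swap]
  exact add_mem_sup (mem_map_of_mem (LinearMap.mem_range_self _ x))
    (smul_mem _ _ (mem_span_singleton_self _))

lemma permRank_mul_swap_le [Fintype α] [DecidableEq α] (g : Equiv.Perm α) (a b : α) :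
    permRank K (g * Equiv.swap a b) ≤ permRank K g + 1 :=
  calc permRank K (g * Equiv.swap a b)
      ≤ finrank K ↥((LinearMap.range (permDiff K g)).map
          (LinearMap.funLeft K K (Equiv.swap a b)) ⊔ (K ∙ root K (a, b))) :=
        finrank_mono (range_permDiff_mul_swap_le g a b)
    _ ≤ permRank K g + 1 :=
        (finrank_add_le_finrank_add_finrank _ _).trans
          (add_le_add (finrank_map_le _ _) (finrank_span_singleton_le_one _))

lemma permRank_le_mul_swap_add_one [Fintype α] [DecidableEq α] (g : Equiv.Perm α) (a b : α) :
    permRank K g ≤ permRank K (g * Equiv.swap a b) + 1 := by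
  simpa [mul_assoc] using permRank_mul_swap_le (g * Equiv.swap a b) a b

/-- Then `a` and `b` lie in different cycles of `g`, which `swap a b` merges. -/
lemma permRank_lt_mul_swap [Fintype α] [DecidableEq α] {g : Equiv.Perm α} {a b : α}
    (h : root K (a, b) ∉ LinearMap.range (permDiff K g)) :
    permRank K g < permRank K (g * Equiv.swap a b) := by
  classical
  set V := LinearMap.range (permDiff K g)
  set φ : (α → K) →ₗ[K] K := (LinearMap.proj a : (α → K) →ₗ[K] K) - LinearMap.proj b
  have hker : LinearMap.ker (permDiff K (g * Equiv.swap a b)) ≤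
      LinearMap.ker (permDiff K g) ⊓ LinearMap.ker φ := by
    intro x hx
    have hxg : ∀ u, x (g u) = x (Equiv.swap a b u) := fun u => by
      simpa [permDiff_apply, sub_eq_zero] using congrFun (LinearMap.mem_ker.1 hx) (Equiv.swap a b u)
    have hdiff : permDiff K g x = (x b - x a) • root K (a, b) := by
      rw [← permDiff_swap]; funext u; simp [permDiff_apply, hxg]
    have hab : x b - x a = 0 := by
      by_contra hc
      exact h ⟨(x b - x a)⁻¹ • x, by rw [map_smul, hdiff, inv_smul_smul₀ hc]⟩
    refine ⟨LinearMap.mem_ker.2 (by rw [hdiff, hab, zero_smul]), LinearMap.mem_ker.2 ?_⟩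
    simp only [φ, LinearMap.sub_apply, LinearMap.proj_apply]
    linear_combination -hab
  -- `x₀` is the indicator of the class of `a` modulo `V`, `g`-invariant as `V ∋ e_u - e_{g u}`.
  set x₀ : α → K := fun u => if root K (u, a) ∈ V then 1 else 0
  have hx₀ : x₀ ∈ LinearMap.ker (permDiff K g) := by
    refine LinearMap.mem_ker.2 (funext fun u => ?_)
    have hu : root K (u, g u) ∈ V := ⟨Pi.single (g u) 1, funext fun v => by
      simp [permDiff_apply, root, Pi.single_apply, g.injective.eq_iff]⟩
    have hiff : root K (g u, a) ∈ V ↔ root K (u, a) ∈ V := by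
      have e : root K (u, a) = root K (u, g u) + root K (g u, a) := by simp [root]
      rw [e, add_mem_cancel_left hu]
    simp [permDiff_apply, x₀, hiff]
  have hφx₀ : x₀ ∉ LinearMap.ker φ := by
    have hb : root K (b, a) ∉ V := fun hb => h (by simpa [root] using neg_mem hb)
    have ha : root K (a, a) ∈ V := by simp [root]
    simp [φ, x₀, ha, hb]
  have hlt : LinearMap.ker (permDiff K (g * Equiv.swap a b)) < LinearMap.ker (permDiff K g) :=
    lt_of_le_of_lt hker (inf_lt_left.2 fun hle => hφx₀ (hle hx₀))
  have h1 := LinearMap.finrank_range_add_finrank_ker (permDiff K g)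
  have h2 := LinearMap.finrank_range_add_finrank_ker (permDiff K (g * Equiv.swap a b))
  have h3 := finrank_lt_finrank_of_lt hlt
  unfold permRank
  omega

lemma rootSpan_append_singleton [DecidableEq α] (l : List (α × α)) (p : α × α) :
    rootSpan K (l ++ [p]) = (K ∙ root K p) ⊔ rootSpan K l := by
  rw [rootSpan, rootSpan, ← span_insert]
  congr 1
  ext v
  simp [or_and_right, exists_or, eq_comm, or_comm]

lemma swapProd_append_singleton [DecidableEq α] (l : List (α × α)) (p : α × α) :
    swapProd (l ++ [p]) = swapProd l * Equiv.swap p.1 p.2 := by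
  simp [swapProd]

lemma root_mem_rootSpan [DecidableEq α] {l : List (α × α)} {p : α × α} (hp : p ∈ l) :
    root K p ∈ rootSpan K l :=
  subset_span ⟨p, hp, rfl⟩

lemma range_permDiff_swapProd_le [DecidableEq α] (l : List (α × α)) :
    LinearMap.range (permDiff K (swapProd l)) ≤ rootSpan K l := by
  induction l using List.reverseRecOn with
  | nil =>
    simp [swapProd, permDiff_one]
  | append_singleton l p ih =>
    have hp : root K p ∈ rootSpan K (l ++ [p]) := root_mem_rootSpan (by simp)
    have hl : rootSpan K l ≤ rootSpan K (l ++ [p]) := by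
      rw [rootSpan_append_singleton]; exact le_sup_right
    rw [swapProd_append_singleton]
    refine (range_permDiff_mul_swap_le _ _ _).trans
      (sup_le ?_ ((span_singleton_le_iff_mem _ _).2 hp))
    rintro _ ⟨x, hx, rfl⟩
    have e : LinearMap.funLeft K K (Equiv.swap p.1 p.2) x =
        x + permDiff K (Equiv.swap p.1 p.2) x := by
      simp [permDiff]
    rw [e, permDiff_swap]
    exact add_mem (hl (ih hx)) (smul_mem _ _ hp)

/-- Each transposition whose root is new to the span raises `permRank` by one, and each of the
others lowers it by at most one; so the new roots are at most half of the list when the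
product is trivial. -/
theorem two_mul_finrank_rootSpan_le [Fintype α] [DecidableEq α] (l : List (α × α)) :
    2 * finrank K (rootSpan K l) ≤ l.length + permRank K (swapProd l) := by
  induction l using List.reverseRecOn with
  | nil =>
    have : rootSpan K ([] : List (α × α)) = ⊥ := by simp [rootSpan]
    simp [this, swapProd, permRank_one]
  | append_singleton l p ih =>
    rw [rootSpan_append_singleton, swapProd_append_singleton, List.length_append,
      List.length_singleton]
    by_cases hp : root K p ∈ rootSpan K l
    · rw [sup_eq_right.2 ((span_singleton_le_iff_mem _ _).2 hp)]
      have := permRank_le_mul_swap_add_one (K := K) (swapProd l) p.1 p.2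
      omega
    · have h1 := permRank_lt_mul_swap (K := K) (g := swapProd l) (a := p.1) (b := p.2)
        fun h => hp (range_permDiff_swapProd_le l h)
      have h2 := finrank_add_le_finrank_add_finrank (K ∙ root K p) (rootSpan K l)
      have h3 := finrank_span_singleton_le_one (K := K) (root K p)
      omega

theorem card_le_finrank_add_one [Fintype α] [DecidableEq α] (V : Submodule K (α → K)) (a : α)
    (h : ∀ u, root K (u, a) ∈ V) : Fintype.card α ≤ finrank K V + 1 := by
  have htop : V ⊔ (K ∙ Pi.single a 1) = ⊤ := by
    rw [eq_top_iff, ← (Pi.basisFun K α).span_eq, span_le]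
    rintro _ ⟨u, rfl⟩
    have e : Pi.basisFun K α u = root K (u, a) + Pi.single a 1 := by simp [root]
    rw [e]
    exact add_mem_sup (h u) (mem_span_singleton_self _)
  have := finrank_add_le_finrank_add_finrank V (K ∙ (Pi.single a 1 : α → K))
  rw [htop, finrank_top, Module.finrank_fintype_fun_eq_card] at this
  have := finrank_span_singleton_le_one (K := K) (Pi.single a 1 : α → K)
  omega

end PermRank

section Affine

variable {n : ℕ}

lemma sub_emod_eq_zero_iff (x y : ℤ) : (x - y) % (n : ℤ) = 0 ↔ (x : ZMod n) = y := by
  rw [← Int.emod_eq_emod_iff_emod_sub_eq_zero, ZMod.intCast_eq_intCast_iff']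

lemma affRefl_apply (i j k : ℤ) : affRefl n i j k =
    if (k : ZMod n) = i then k - i + j else if (k : ZMod n) = j then k - j + i else k := by
  simp only [affRefl, sub_emod_eq_zero_iff]

lemma isAffRefl_affRefl {i j : ℤ} (h : (i : ZMod n) ≠ j) : IsAffRefl n (affRefl n i j) :=
  ⟨i, j, by rwa [Ne, sub_emod_eq_zero_iff], rfl⟩

lemma semiconj_affRefl (i j : ℤ) :
    Function.Semiconj (Int.cast : ℤ → ZMod n) (affRefl n i j) (Equiv.swap (i : ZMod n) j) := by
  intro k
  rw [affRefl_apply]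
  split_ifs with hi hj
  · simp [hi]
  · simp [hj]
  · simp [Equiv.swap_apply_of_ne_of_ne hi hj]

lemma commute_affRefl (i j : ℤ) : Function.Commute (affRefl n i j) (· + (n : ℤ)) := by
  intro k
  simp only [affRefl_apply]
  push_cast
  simp only [ZMod.natCast_self, add_zero]
  split_ifs <;> ring

def transl (n : ℕ) (c : ZMod n → ℤ) : ℤ → ℤ := fun k => k + n * c k

lemma transl_intCast (c : ZMod n → ℤ) (k : ℤ) : ((transl n c k : ℤ) : ZMod n) = k := by
  simp [transl]

lemma transl_comp (c c' : ZMod n → ℤ) : transl n c ∘ transl n c' = transl n (c + c') := by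
  funext k
  rw [Function.comp_apply, transl, transl_intCast]
  simp only [transl, Pi.add_apply]
  ring

lemma transl_zero : transl n 0 = id := by
  funext k; simp [transl]

lemma lam_eq_transl : lam n = transl n (1 - Pi.single 0 (n : ℤ)) := by
  funext k
  have h0 : k % (n : ℤ) = 0 ↔ (k : ZMod n) = 0 := by
    simpa using sub_emod_eq_zero_iff (n := n) k 0
  simp only [lam, transl, h0, Pi.sub_apply, Pi.one_apply, Pi.single_apply]
  split_ifs <;> ring

lemma affRefl_add_comp_affRefl {i j : ℤ} (h : (i : ZMod n) ≠ j) :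
    affRefl n (i + n) j ∘ affRefl n i j =
      transl n (Pi.single (i : ZMod n) 1 - Pi.single (j : ZMod n) 1) := by
  have hn : ((i + n : ℤ) : ZMod n) = i := by simp
  funext k
  simp only [Function.comp_apply, transl, Pi.sub_apply, Pi.single_apply]
  by_cases hi : (k : ZMod n) = i
  · have e : ((k - i + j : ℤ) : ZMod n) = j := by push_cast [hi]; ring
    rw [affRefl_apply i, if_pos hi, affRefl_apply, e, hn, if_neg (Ne.symm h), if_pos rfl,
      if_pos hi, if_neg (by rwa [hi])]
    ring
  by_cases hj : (k : ZMod n) = j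
  · have e : ((k - j + i : ℤ) : ZMod n) = i := by push_cast [hj]; ring
    rw [affRefl_apply i, if_neg hi, if_pos hj, affRefl_apply, e, hn, if_pos rfl, if_neg hi,
      if_pos hj]
    ring
  · rw [affRefl_apply i, if_neg hi, if_neg hj, affRefl_apply, hn, if_neg hi, if_neg hj, if_neg hi,
      if_neg hj]
    ring

lemma listProd_append (l l' : List (ℤ → ℤ)) :
    listProd (l ++ l') = listProd l ∘ listProd l' := by
  induction l with
  | nil => rfl
  | cons t l ih => simp only [List.cons_append, listProd, List.foldr_cons] at ih ⊢; rw [ih]; rfl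

lemma listProd_flatMap {β : Type*} (L : List β) (f : β → List (ℤ → ℤ)) :
    listProd (L.flatMap f) = listProd (L.map fun x => listProd (f x)) := by
  induction L with
  | nil => rfl
  | cons x L ih => rw [List.flatMap_cons, listProd_append, ih]; rfl

lemma listProd_map_transl {β : Type*} (L : List β) (c : β → ZMod n → ℤ) :
    listProd (L.map fun x => transl n (c x)) = transl n (L.map c).sum := by
  induction L with
  | nil => exact transl_zero.symm
  | cons x L ih => simp only [List.map_cons, List.sum_cons, ← transl_comp, ← ih]; rfl

theorem exists_factorization_lam [NeZero n] :
    ∃ l : List (ℤ → ℤ), (∀ t ∈ l, IsAffRefl n t) ∧ l.length = 2 * n - 2 ∧ listProd l = lam n := by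
  set L := (Finset.univ.erase (0 : ZMod n)).toList
  have hL : ∀ x ∈ L, ((x.val : ℤ) : ZMod n) ≠ (0 : ℤ) := by simp [L]
  refine ⟨L.flatMap fun x => [affRefl n (x.val + n) 0, affRefl n x.val 0], ?_, ?_, ?_⟩
  · simp only [List.mem_flatMap, List.mem_cons, List.not_mem_nil, or_false]
    rintro t ⟨x, hx, rfl | rfl⟩
    · exact isAffRefl_affRefl (by simpa using hL x hx)
    · exact isAffRefl_affRefl (hL x hx)
  · simp [L, List.length_flatMap, Finset.card_erase_of_mem, ZMod.card]
    omega
  · have hstep : ∀ x ∈ L, listProd [affRefl n (x.val + n) 0, affRefl n x.val 0] =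
        transl n (Pi.single x 1 - Pi.single 0 1) := fun x hx => by
      rw [show listProd [affRefl n (x.val + n) 0, affRefl n x.val 0] =
        affRefl n (x.val + n) 0 ∘ affRefl n x.val 0 from rfl, affRefl_add_comp_affRefl (hL x hx)]
      simp
    rw [listProd_flatMap, List.map_congr_left hstep, listProd_map_transl,
      Finset.sum_map_toList, lam_eq_transl]
    congr 1
    funext y
    simp [Finset.sum_pi_single, Finset.card_erase_of_mem, ZMod.card]
    rcases eq_or_ne y 0 with rfl | hy
    · simp [Nat.cast_sub NeZero.one_le]
    · simp [hy]

def affProd (n : ℕ) (ps : List (ℤ × ℤ)) : ℤ → ℤ :=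
  listProd (ps.map fun p => affRefl n p.1 p.2)

def residuePairs (n : ℕ) (ps : List (ℤ × ℤ)) : List (ZMod n × ZMod n) :=
  ps.map fun p => ((p.1 : ZMod n), (p.2 : ZMod n))

lemma affProd_append_singleton (ps : List (ℤ × ℤ)) (p : ℤ × ℤ) :
    affProd n (ps ++ [p]) = affProd n ps ∘ affRefl n p.1 p.2 := by
  rw [affProd, List.map_append, listProd_append]; rfl

lemma semiconj_affProd (ps : List (ℤ × ℤ)) :
    Function.Semiconj (Int.cast : ℤ → ZMod n) (affProd n ps)
      (swapProd (residuePairs n ps)) := by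
  induction ps using List.reverseRecOn with
  | nil => exact Function.Semiconj.id_right
  | append_singleton ps p ih =>
    rw [affProd_append_singleton, residuePairs, List.map_append, ← residuePairs,
      List.map_singleton, swapProd_append_singleton, Equiv.Perm.coe_mul]
    exact ih.comp_right (semiconj_affRefl p.1 p.2)

lemma commute_affProd (ps : List (ℤ × ℤ)) :
    Function.Commute (affProd n ps) (· + (n : ℤ)) := by
  induction ps using List.reverseRecOn with
  | nil => exact fun _ => rfl
  | append_singleton ps p ih =>
    rw [affProd_append_singleton]
    exact ih.comp_left (commute_affRefl p.1 p.2)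

end Affine

def disp (n : ℕ) (f : ℤ → ℤ) : ZMod n → ℤ := fun x => f x.val - x.val

section LowerBound

variable {n : ℕ} [NeZero n]

lemma disp_intCast {f : ℤ → ℤ} (hf : Function.Commute f (· + (n : ℤ))) (k : ℤ) :
    disp n f k = f k - k := by
  have hp : Function.Periodic (fun k => f k - k) n := fun k => by
    simp only [show f (k + n) = f k + n from hf k]; ring
  rw [disp, ZMod.val_intCast, Int.emod_def, mul_comm]
  exact hp.sub_int_mul_eq (k / n)

lemma disp_transl (c : ZMod n → ℤ) : disp n (transl n c) = (n : ℤ) • c := by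
  funext x
  simp [disp, transl]

lemma dotProduct_disp_comp {f g : ℤ → ℤ} {π : Equiv.Perm (ZMod n)}
    (hf : Function.Commute f (· + (n : ℤ)))
    (hg : Function.Semiconj (Int.cast : ℤ → ZMod n) g π)
    (y : ZMod n → ℤ) (hy : ∀ x, y (π x) = y x) :
    y ⬝ᵥ disp n (f ∘ g) = y ⬝ᵥ disp n f + y ⬝ᵥ disp n g := by
  have h : disp n (f ∘ g) = disp n f ∘ π + disp n g := by
    funext x
    have hx : ((g x.val : ℤ) : ZMod n) = π x := by simpa using hg x.val
    simp only [Pi.add_apply, Function.comp_apply, ← hx, disp_intCast hf]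
    simp only [disp, Function.comp_apply]
    ring
  rw [h, dotProduct_add]
  congr 1
  simpa [dotProduct, hy] using Equiv.sum_comp π (fun x => y x * disp n f x)

lemma dotProduct_disp_affRefl {i j : ℤ} (hij : (i : ZMod n) ≠ j) (y : ZMod n → ℤ)
    (hy : y i = y j) : y ⬝ᵥ disp n (affRefl n i j) = 0 := by
  have h : disp n (affRefl n i j) =
      Pi.single (i : ZMod n) (j - i) + Pi.single (j : ZMod n) (i - j) := by
    funext x
    have hx : (((x.val : ℕ) : ℤ) : ZMod n) = x := by simp
    rw [disp, affRefl_apply, hx]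
    simp only [Pi.add_apply, Pi.single_apply]
    split_ifs <;> simp_all <;> ring
  rw [h, dotProduct_add, dotProduct_single, dotProduct_single, hy]
  ring

lemma dotProduct_disp_affProd {ps : List (ℤ × ℤ)} (hps : ∀ p ∈ ps, (p.1 : ZMod n) ≠ p.2)
    (y : ZMod n → ℤ) (hy : ∀ p ∈ residuePairs n ps, y p.1 = y p.2) :
    y ⬝ᵥ disp n (affProd n ps) = 0 := by
  induction ps using List.reverseRecOn with
  | nil => simp [affProd, listProd, disp, dotProduct]
  | append_singleton ps p ih =>
    rw [residuePairs, List.map_append, ← residuePairs] at hy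
    have hp : y p.1 = y p.2 := hy _ (List.mem_append_right _ (List.mem_singleton_self _))
    have hswap : ∀ x, y (Equiv.swap (p.1 : ZMod n) p.2 x) = y x := fun x => by
      rw [Equiv.swap_apply_def]
      split_ifs <;> simp_all
    rw [affProd_append_singleton, dotProduct_disp_comp (commute_affProd ps) (semiconj_affRefl _ _) y
      hswap, ih (fun q hq => hps q (List.mem_append_left _ hq))
      (fun q hq => hy q (List.mem_append_left _ hq)),
      dotProduct_disp_affRefl (hps p (by simp)) y hp, add_zero]

lemma swapProd_residuePairs_eq_one {ps : List (ℤ × ℤ)} (h : affProd n ps = lam n) :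
    swapProd (residuePairs n ps) = 1 := by
  ext x
  have hx := semiconj_affProd (n := n) ps (x.val : ℤ)
  rw [h, lam_eq_transl, transl_intCast] at hx
  simpa using hx.symm

/-- The roots of the factors of `λₙ` connect every residue class to `0`: otherwise the
displacement vector `n • (1 - Pi.single 0 n)` of `λₙ` would not be orthogonal to the
indicator of the classes connected to `0`. -/
theorem card_le_finrank_rootSpan_add_one {ps : List (ℤ × ℤ)}
    (hps : ∀ p ∈ ps, (p.1 : ZMod n) ≠ p.2) (h : affProd n ps = lam n) :
    n ≤ finrank ℚ (rootSpan ℚ (residuePairs n ps)) + 1 := by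
  classical
  set V := rootSpan ℚ (residuePairs n ps)
  set y : ZMod n → ℤ := fun u => if root ℚ (u, 0) ∈ V then 1 else 0
  have hy : ∀ p ∈ residuePairs n ps, y p.1 = y p.2 := fun p hp => by
    have e : root ℚ (p.1, 0) = root ℚ p + root ℚ (p.2, 0) := by simp [root]
    have hmem : root ℚ p + root ℚ (p.2, 0) ∈ V ↔ root ℚ (p.2, 0) ∈ V :=
      add_mem_cancel_left (root_mem_rootSpan hp)
    simp only [y, e, hmem]
  have hy0 : y 0 = 1 := by simp [y, root]
  have horth := dotProduct_disp_affProd hps y hy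
  rw [h, lam_eq_transl, disp_transl, dotProduct_smul, dotProduct_sub, dotProduct_single,
    hy0] at horth
  have hsum : ∑ u, (1 - y u) = 0 := by
    rw [dotProduct_one, one_mul, smul_eq_mul, mul_eq_zero, sub_eq_zero] at horth
    rw [Finset.sum_sub_distrib, horth.resolve_left (NeZero.ne _)]
    simp [ZMod.card]
  have hall : ∀ u, root ℚ (u, 0) ∈ V := fun u => by
    have hnonneg : ∀ u ∈ Finset.univ, 0 ≤ 1 - y u := fun u _ => by
      simp only [y]; split_ifs <;> simp
    have h1 := (Finset.sum_eq_zero_iff_of_nonneg hnonneg).1 hsum u (Finset.mem_univ u)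
    by_contra hu
    simp [y, hu] at h1
  simpa [ZMod.card] using card_le_finrank_add_one V 0 hall

theorem two_mul_sub_two_le_length {ps : List (ℤ × ℤ)}
    (hps : ∀ p ∈ ps, (p.1 : ZMod n) ≠ p.2) (h : affProd n ps = lam n) : 2 * n - 2 ≤ ps.length := by
  have h1 := two_mul_finrank_rootSpan_le (K := ℚ) (residuePairs n ps)
  rw [swapProd_residuePairs_eq_one h, permRank_one, residuePairs, List.length_map,
    ← residuePairs] at h1
  have h2 := card_le_finrank_rootSpan_add_one hps h
  omega

end LowerBound

/-- For every integer `n ≥ 2`, the reflection length of `λₙ` equals `2n-2`: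
`λₙ` is a product of `2n-2` affine reflections and of no fewer. -/
theorem stmt0 (n : ℕ) (hn : 2 ≤ n) :
    (∃ l : List (ℤ → ℤ), (∀ t ∈ l, IsAffRefl n t) ∧ l.length = 2 * n - 2 ∧
      listProd l = lam n) ∧
    (∀ l : List (ℤ → ℤ), (∀ t ∈ l, IsAffRefl n t) → listProd l = lam n →
      2 * n - 2 ≤ l.length) := by
  have : NeZero n := ⟨by omega⟩
  refine ⟨exists_factorization_lam, fun l hl hprod => ?_⟩
  choose! i j hij hl using hl
  set ps := l.map fun t => (i t, j t)
  have hps : ∀ p ∈ ps, (p.1 : ZMod n) ≠ p.2 := by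
    simpa [ps, ← sub_emod_eq_zero_iff] using hij
  have hmap : ps.map (fun p => affRefl n p.1 p.2) = l := by
    rw [List.map_map]
    exact (List.map_congr_left hl).symm.trans (List.map_id l)
  simpa [ps] using two_mul_sub_two_le_length hps (by rw [affProd, hmap, hprod])
end

section
/- Let n ≥ 2 and let r = [r_1, …, r_{2n−2}] be a factorization of λ_n into 2n−2 affine reflections. Then r is tree-like if and only if there exist integers a_0, a_1, …, a_{2n−2} such that r_ℓ = ((a_{ℓ−1}, a_ℓ)) and |a_ℓ − a_{ℓ−1}| < n for each ℓ = 1, …, 2n−2. -/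
/-!
Follow the trajectories `k ↦ r_k ⋯ r_m x` of the representatives `x ∈ {1, …, n}`. A step through
`((a_k, a_{k+1}))` moves exactly two of them, one up and one down by `a_{k+1} - a_k`, while in
total `x` moves by `λₙ x - x`, that is by `n`, or by `-n(n-1)` for `x = n`.

For an increasing chain the total motion `2 ∑ (a_{k+1} - a_k) = 2n(n-1)` equals `∑ |λₙ x - x|`,
so no trajectory backtracks, and a representative other than `n` climbing by `a_{k+1} - a_k` has
net move `n`: the step is shorter than `n`.

Conversely, with steps shorter than `n` every representative moves at least twice, and the one in
the class of `a_{2n-2}` moves at all `2n-2` steps; as only `2(2n-2)` moves occur, every other one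
moves exactly twice. If that class is `0`, the representative climbing at a given step reaches its
net move `n` with one further move shorter than `n`, so the step goes up. Otherwise `n` itself
moves twice for a net move of `n(n-1)`, forcing `n = 2`, where the chain is reversed by hand.
-/

open Finset

section AffRefl

variable {n : ℕ} {i j p q x d : ℤ}

lemma affRefl_of_dvd_left (h : (n : ℤ) ∣ x - i) : affRefl n i j x = x - i + j := by
  simp only [affRefl, if_pos (Int.emod_eq_zero_of_dvd h)]

lemma affRefl_of_dvd_right (hij : ¬ (n : ℤ) ∣ i - j) (h : (n : ℤ) ∣ x - j) :
    affRefl n i j x = x - j + i := by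
  have hi : ¬ (n : ℤ) ∣ x - i := fun hi => hij (by simpa using dvd_sub h hi)
  simp only [affRefl, if_neg (mt Int.dvd_of_emod_eq_zero hi), if_pos (Int.emod_eq_zero_of_dvd h)]

lemma affRefl_of_not_dvd (hi : ¬ (n : ℤ) ∣ x - i) (hj : ¬ (n : ℤ) ∣ x - j) :
    affRefl n i j x = x := by
  simp only [affRefl, if_neg (mt Int.dvd_of_emod_eq_zero hi),
    if_neg (mt Int.dvd_of_emod_eq_zero hj)]

lemma affRefl_comm (hij : ¬ (n : ℤ) ∣ i - j) : affRefl n i j = affRefl n j i := by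
  have hji : ¬ (n : ℤ) ∣ j - i := by rwa [dvd_sub_comm]
  funext x
  by_cases hi : (n : ℤ) ∣ x - i
  · rw [affRefl_of_dvd_left hi, affRefl_of_dvd_right hji hi]
  by_cases hj : (n : ℤ) ∣ x - j
  · rw [affRefl_of_dvd_right hij hj, affRefl_of_dvd_left hj]
  rw [affRefl_of_not_dvd hi hj, affRefl_of_not_dvd hj hi]

lemma affRefl_add_of_dvd (hd : (n : ℤ) ∣ d) (x : ℤ) :
    affRefl n i j (x + d) = affRefl n i j x + d := by
  have hsub : ∀ c, (n : ℤ) ∣ x + d - c ↔ (n : ℤ) ∣ x - c := fun c => by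
    rw [show x + d - c = x - c + d by ring, dvd_add_left hd]
  simp only [affRefl, ← Int.dvd_iff_emod_eq_zero, hsub]
  split_ifs <;> ring

lemma affRefl_add_add (hd : (n : ℤ) ∣ d) : affRefl n (i + d) (j + d) = affRefl n i j := by
  have hsub : ∀ x c, (n : ℤ) ∣ x - (c + d) ↔ (n : ℤ) ∣ x - c := fun x c => by
    rw [show x - (c + d) = x - c - d by ring, dvd_sub_left hd]
  funext x
  simp only [affRefl, ← Int.dvd_iff_emod_eq_zero, hsub]
  split_ifs <;> ring

lemma affRefl_involutive (hij : ¬ (n : ℤ) ∣ i - j) : Function.Involutive (affRefl n i j) := by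
  intro x
  by_cases hi : (n : ℤ) ∣ x - i
  · rw [affRefl_of_dvd_left hi, affRefl_of_dvd_right hij (by simpa using hi)]; ring
  by_cases hj : (n : ℤ) ∣ x - j
  · rw [affRefl_of_dvd_right hij hj, affRefl_of_dvd_left (by simpa using hj)]; ring
  rw [affRefl_of_not_dvd hi hj, affRefl_of_not_dvd hi hj]

lemma affRefl_ne_self_iff (hij : ¬ (n : ℤ) ∣ i - j) :
    affRefl n i j x ≠ x ↔ (n : ℤ) ∣ x - i ∨ (n : ℤ) ∣ x - j := by
  refine ⟨fun h => ?_, ?_⟩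
  · by_contra! hx
    exact h (affRefl_of_not_dvd hx.1 hx.2)
  rintro (hi | hj)
  · rw [affRefl_of_dvd_left hi]
    rintro h
    exact hij ⟨0, by linarith⟩
  · rw [affRefl_of_dvd_right hij hj]
    rintro h
    exact hij ⟨0, by linarith⟩

lemma abs_affRefl_sub_self_of_ne (h : affRefl n i j x ≠ x) :
    |affRefl n i j x - x| = |j - i| := by
  simp only [affRefl] at h ⊢
  split_ifs at h ⊢
  · ring_nf
  · rw [abs_sub_comm]; ring_nf
  · exact absurd rfl h

lemma abs_affRefl_sub_self_le : |affRefl n i j x - x| ≤ |j - i| := by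
  by_cases h : affRefl n i j x = x
  · simp [h]
  · exact (abs_affRefl_sub_self_of_ne h).le

/-- For `p ≡ q`, `affRefl n p q` translates a single residue class, which is an involution only
when it is the identity. -/
lemma not_dvd_sub_of_isAffRefl (h : IsAffRefl n (affRefl n p q)) : ¬ (n : ℤ) ∣ p - q := by
  obtain ⟨i, j, hij, ht⟩ := h
  replace hij : ¬ (n : ℤ) ∣ i - j := mt Int.emod_eq_zero_of_dvd hij
  intro hpq
  have hp : affRefl n p q p = q := by rw [affRefl_of_dvd_left (by simp)]; ring
  have hq : affRefl n p q q = q - p + q := affRefl_of_dvd_left (by rwa [dvd_sub_comm])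
  have hpq : p = q := by
    have := affRefl_involutive hij p
    rw [← ht, hp, hq] at this
    linarith
  subst hpq
  have hi : affRefl n p p i = i := by
    by_cases h : (n : ℤ) ∣ i - p
    · rw [affRefl_of_dvd_left h]; ring
    · exact affRefl_of_not_dvd h h
  rw [ht, affRefl_of_dvd_left (by simp)] at hi
  exact hij ⟨0, by linarith⟩

end AffRefl

/-- The elements of `W̃ₙ`, without the normalisation of `∑ w(i)`. -/
def IsAffinePerm (n : ℕ) (f : ℤ → ℤ) : Prop :=
  Function.Bijective f ∧ ∀ x d : ℤ, (n : ℤ) ∣ d → f (x + d) = f x + d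

lemma eq_of_mem_Icc_of_dvd_sub {n : ℕ} {x y : ℤ} (hx : x ∈ Icc 1 (n : ℤ))
    (hy : y ∈ Icc 1 (n : ℤ)) (h : (n : ℤ) ∣ x - y) : x = y := by
  rw [mem_Icc] at hx hy
  have := Int.eq_zero_of_abs_lt_dvd h (abs_lt.2 ⟨by omega, by omega⟩)
  omega

lemma dvd_iff_eq_of_mem_Icc {n : ℕ} {x : ℤ} (hx : x ∈ Icc 1 (n : ℤ)) :
    (n : ℤ) ∣ x ↔ x = n := by
  refine ⟨fun h => eq_of_mem_Icc_of_dvd_sub hx ?_ (by simpa using h), fun h => h ▸ dvd_rfl⟩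
  rw [mem_Icc] at hx ⊢
  omega

namespace IsAffinePerm

variable {n : ℕ} {f g : ℤ → ℤ}

lemma id : IsAffinePerm n id := ⟨Function.bijective_id, fun _ _ _ => rfl⟩

lemma comp (hf : IsAffinePerm n f) (hg : IsAffinePerm n g) : IsAffinePerm n (f ∘ g) :=
  ⟨hf.1.comp hg.1, fun x d hd => by simp only [Function.comp_apply, hg.2 x d hd, hf.2 _ d hd]⟩

lemma dvd_sub_iff (hf : IsAffinePerm n f) {x y : ℤ} : (n : ℤ) ∣ f x - f y ↔ (n : ℤ) ∣ x - y := by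
  constructor
  · rintro ⟨c, hc⟩
    have : f x = f (y + n * c) := by rw [hf.2 y _ (dvd_mul_right _ _)]; linarith
    rw [hf.1.1 this]
    simp
  · rintro ⟨c, hc⟩
    rw [show x = y + n * c by linarith, hf.2 y _ (dvd_mul_right _ _)]
    simp

lemma exists_mem_Icc_dvd_sub (hf : IsAffinePerm n f) (hn : 0 < n) (c : ℤ) :
    ∃ x ∈ Icc 1 (n : ℤ), (n : ℤ) ∣ f x - c := by
  obtain ⟨z, rfl⟩ := hf.1.2 c
  have hn' : (0 : ℤ) < n := by exact_mod_cast hn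
  refine ⟨(z - 1) % n + 1, mem_Icc.2 ⟨?_, ?_⟩, hf.dvd_sub_iff.2 ?_⟩
  · linarith [Int.emod_nonneg (z - 1) hn'.ne']
  · linarith [Int.emod_lt_of_pos (z - 1) hn']
  · exact ⟨-((z - 1) / n), by rw [Int.emod_def]; ring⟩

lemma card_filter_dvd_sub (hf : IsAffinePerm n f) (hn : 0 < n) (c : ℤ) :
    #{x ∈ Icc 1 (n : ℤ) | (n : ℤ) ∣ f x - c} = 1 := by
  obtain ⟨x, hx, hxc⟩ := hf.exists_mem_Icc_dvd_sub hn c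
  refine card_eq_one.2 ⟨x, eq_singleton_iff_unique_mem.2 ⟨mem_filter.2 ⟨hx, hxc⟩, ?_⟩⟩
  intro y hy
  rw [mem_filter] at hy
  refine eq_of_mem_Icc_of_dvd_sub hy.1 hx (hf.dvd_sub_iff.1 ?_)
  simpa using dvd_sub hy.2 hxc

end IsAffinePerm

section AffinePerm

variable {n : ℕ} {i j : ℤ} {f : ℤ → ℤ}

lemma isAffinePerm_affRefl (hij : ¬ (n : ℤ) ∣ i - j) : IsAffinePerm n (affRefl n i j) :=
  ⟨(affRefl_involutive hij).bijective, fun x _ hd => affRefl_add_of_dvd hd x⟩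

lemma isAffinePerm_listProd {l : List (ℤ → ℤ)} (hl : ∀ t ∈ l, IsAffRefl n t) :
    IsAffinePerm n (listProd l) := by
  induction l with
  | nil => exact IsAffinePerm.id
  | cons t l ih =>
    obtain ⟨i, j, hij, rfl⟩ := hl t List.mem_cons_self
    exact (isAffinePerm_affRefl (mt Int.emod_eq_zero_of_dvd hij)).comp
      (ih fun t ht => hl t (List.mem_cons_of_mem _ ht))

lemma card_filter_affRefl_comp_ne (hf : IsAffinePerm n f) (hn : 0 < n)
    (hij : ¬ (n : ℤ) ∣ i - j) : #{x ∈ Icc 1 (n : ℤ) | affRefl n i j (f x) ≠ f x} = 2 := by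
  classical
  simp_rw [affRefl_ne_self_iff hij]
  rw [filter_or, card_union_of_disjoint, hf.card_filter_dvd_sub hn, hf.card_filter_dvd_sub hn]
  refine disjoint_filter.2 fun x _ hi hj => hij ?_
  simpa using dvd_sub hj hi

lemma sum_abs_affRefl_comp_sub (hf : IsAffinePerm n f) (hn : 0 < n)
    (hij : ¬ (n : ℤ) ∣ i - j) : ∑ x ∈ Icc 1 (n : ℤ), |affRefl n i j (f x) - f x| = 2 * |j - i| := by
  rw [← sum_filter_ne_zero]
  simp_rw [abs_ne_zero, sub_ne_zero]
  rw [sum_congr rfl fun x hx => abs_affRefl_sub_self_of_ne (mem_filter.1 hx).2, sum_const,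
    card_filter_affRefl_comp_ne hf hn hij, two_nsmul, two_mul]

end AffinePerm

lemma abs_sum_le_card_filter_ne_zero_nsmul {ι R : Type*} [AddCommGroup R] [LinearOrder R]
    [IsOrderedAddMonoid R] {s : Finset ι} {f : ι → R} {B : R} (h : ∀ i ∈ s, |f i| ≤ B) :
    |∑ i ∈ s, f i| ≤ #{i ∈ s | f i ≠ 0} • B := by
  classical
  rw [← sum_filter_ne_zero]
  exact (abs_sum_le_sum_abs _ _).trans
    (sum_le_card_nsmul _ _ _ fun i hi => h i (mem_filter.1 hi).1)

section Lam

variable {n : ℕ} {x : ℤ}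

lemma lam_of_dvd (h : (n : ℤ) ∣ x) : lam n x = x - n * (n - 1) := by
  simp only [lam, if_pos (Int.emod_eq_zero_of_dvd h)]

lemma lam_of_not_dvd (h : ¬ (n : ℤ) ∣ x) : lam n x = x + n := by
  simp only [lam, if_neg (mt Int.dvd_of_emod_eq_zero h)]

lemma le_abs_lam_sub (hn : 2 ≤ n) (x : ℤ) : (n : ℤ) ≤ |lam n x - x| := by
  have hn' : (2 : ℤ) ≤ n := by exact_mod_cast hn
  by_cases h : (n : ℤ) ∣ x
  · rw [lam_of_dvd h, sub_sub_cancel_left, abs_neg, abs_of_nonneg (by nlinarith)]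
    nlinarith
  · rw [lam_of_not_dvd h, add_sub_cancel_left, abs_of_nonneg (by omega)]

lemma sum_abs_lam_sub (hn : 0 < n) :
    ∑ x ∈ Icc 1 (n : ℤ), |lam n x - x| = 2 * (n * (n - 1)) := by
  have hsplit : Icc 1 (n : ℤ) = insert (n : ℤ) (Icc 1 ((n : ℤ) - 1)) := by
    ext x; simp only [mem_Icc, mem_insert]; omega
  have hrest : ∀ x ∈ Icc 1 ((n : ℤ) - 1), |lam n x - x| = n := fun x hx => by
    rw [mem_Icc] at hx
    rw [lam_of_not_dvd fun h => by have := Int.le_of_dvd (by omega) h; omega,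
      add_sub_cancel_left, abs_of_nonneg (by omega)]
  rw [hsplit, sum_insert (by simp), sum_congr rfl hrest, sum_const, Int.card_Icc,
    lam_of_dvd dvd_rfl, sub_sub_cancel_left, abs_neg, abs_of_nonneg (by nlinarith),
    nsmul_eq_mul, Int.toNat_of_nonneg (by omega)]
  ring

end Lam

section Chain

variable {n : ℕ} {l : List (ℤ → ℤ)} {a : ℕ → ℤ} {k : ℕ} {x : ℤ}

/-- `EndSeq` without the monotonicity. -/
def IsReflChain (n : ℕ) (l : List (ℤ → ℤ)) (a : ℕ → ℤ) : Prop :=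
  ∀ k (h : k < l.length), l.get ⟨k, h⟩ = affRefl n (a k) (a (k + 1))

lemma suffixProd_eq_comp (h : k < l.length) :
    suffixProd l k = l.get ⟨k, h⟩ ∘ suffixProd l (k + 1) := by
  rw [suffixProd, List.drop_eq_getElem_cons h]
  rfl

lemma suffixProd_length (l : List (ℤ → ℤ)) : suffixProd l l.length = id := by
  simp [suffixProd, listProd]

lemma isAffinePerm_suffixProd (hl : ∀ t ∈ l, IsAffRefl n t) (k : ℕ) :
    IsAffinePerm n (suffixProd l k) :=
  isAffinePerm_listProd fun t ht => hl t (List.mem_of_mem_drop ht)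

/-- The move of the trajectory `k ↦ r_k ⋯ r_m x` of `x` at the step through `r_k`. -/
def stepDisp (l : List (ℤ → ℤ)) (k : ℕ) (x : ℤ) : ℤ :=
  suffixProd l k x - suffixProd l (k + 1) x

lemma sum_stepDisp (hprod : listProd l = lam n) (x : ℤ) :
    ∑ k ∈ range l.length, stepDisp l k x = lam n x - x := by
  unfold stepDisp
  rw [sum_range_sub' (fun k => suffixProd l k x), suffixProd_length]
  simp [suffixProd, hprod]

lemma abs_lam_sub_le_sum_abs_stepDisp (hprod : listProd l = lam n) (x : ℤ) :
    |lam n x - x| ≤ ∑ k ∈ range l.length, |stepDisp l k x| :=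
  sum_stepDisp hprod x ▸ abs_sum_le_sum_abs _ _

namespace IsReflChain

lemma not_dvd_sub (hl : ∀ t ∈ l, IsAffRefl n t) (ha : IsReflChain n l a) (hk : k < l.length) :
    ¬ (n : ℤ) ∣ a k - a (k + 1) :=
  not_dvd_sub_of_isAffRefl (ha k hk ▸ hl _ (List.get_mem _ _))

lemma suffixProd_apply (hl : ∀ t ∈ l, IsAffRefl n t) (ha : IsReflChain n l a)
    (hk : k ≤ l.length) : suffixProd l k (a l.length) = a k := by
  induction hk using Nat.decreasingInduction with
  | self => simp [suffixProd_length]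
  | of_succ k hk ih =>
    rw [suffixProd_eq_comp hk, Function.comp_apply, ih, ha k hk,
      affRefl_of_dvd_right (ha.not_dvd_sub hl hk) (by simp)]
    ring

lemma dvd_suffixProd_sub (hl : ∀ t ∈ l, IsAffRefl n t) (ha : IsReflChain n l a)
    (hx : (n : ℤ) ∣ x - a l.length) (hk : k ≤ l.length) : (n : ℤ) ∣ suffixProd l k x - a k := by
  rw [← ha.suffixProd_apply hl hk]
  exact (isAffinePerm_suffixProd hl k).dvd_sub_iff.2 hx

lemma stepDisp_eq (ha : IsReflChain n l a) (hk : k < l.length) :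
    stepDisp l k x = affRefl n (a k) (a (k + 1)) (suffixProd l (k + 1) x) - suffixProd l (k + 1) x := by
  rw [stepDisp, suffixProd_eq_comp hk, Function.comp_apply, ha k hk]

lemma abs_stepDisp_le (ha : IsReflChain n l a) (hk : k < l.length) :
    |stepDisp l k x| ≤ |a (k + 1) - a k| := by
  rw [ha.stepDisp_eq hk]
  exact abs_affRefl_sub_self_le

lemma sum_abs_stepDisp (hl : ∀ t ∈ l, IsAffRefl n t) (ha : IsReflChain n l a) (hn : 0 < n)
    (hk : k < l.length) : ∑ x ∈ Icc 1 (n : ℤ), |stepDisp l k x| = 2 * |a (k + 1) - a k| := by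
  simp_rw [ha.stepDisp_eq hk]
  exact sum_abs_affRefl_comp_sub (isAffinePerm_suffixProd hl _) hn (ha.not_dvd_sub hl hk)

lemma card_filter_stepDisp_ne_zero (hl : ∀ t ∈ l, IsAffRefl n t) (ha : IsReflChain n l a)
    (hn : 0 < n) (hk : k < l.length) : #{x ∈ Icc 1 (n : ℤ) | stepDisp l k x ≠ 0} = 2 := by
  simp_rw [ha.stepDisp_eq hk, sub_ne_zero]
  exact card_filter_affRefl_comp_ne (isAffinePerm_suffixProd hl _) hn (ha.not_dvd_sub hl hk)

lemma stepDisp_ne_zero (hl : ∀ t ∈ l, IsAffRefl n t) (ha : IsReflChain n l a)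
    (hx : (n : ℤ) ∣ x - a l.length) (hk : k < l.length) : stepDisp l k x ≠ 0 := by
  rw [ha.stepDisp_eq hk, sub_ne_zero, affRefl_ne_self_iff (ha.not_dvd_sub hl hk)]
  exact Or.inr (ha.dvd_suffixProd_sub hl hx hk)

/-- Before step `k` the representative `x` of the class of `a l.length` lies in the class of
`a (k+1)`, so the representative moving up from the class of `a k` is another one. -/
lemma exists_stepDisp_eq (hl : ∀ t ∈ l, IsAffRefl n t) (ha : IsReflChain n l a) (hn : 0 < n)
    (hx : (n : ℤ) ∣ x - a l.length) (hk : k < l.length) :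
    ∃ y ∈ Icc 1 (n : ℤ), y ≠ x ∧ stepDisp l k y = a (k + 1) - a k := by
  obtain ⟨y, hy, hyk⟩ := (isAffinePerm_suffixProd hl (k + 1)).exists_mem_Icc_dvd_sub hn (a k)
  refine ⟨y, hy, ?_, by rw [ha.stepDisp_eq hk, affRefl_of_dvd_left hyk]; ring⟩
  rintro rfl
  exact ha.not_dvd_sub hl hk (by simpa using dvd_sub (ha.dvd_suffixProd_sub hl hx hk) hyk)

end IsReflChain

end Chain

section Increasing

variable {n : ℕ} {l : List (ℤ → ℤ)} {a : ℕ → ℤ} {k : ℕ}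

lemma IsReflChain.sum_sum_abs_stepDisp (hl : ∀ t ∈ l, IsAffRefl n t) (ha : IsReflChain n l a)
    (hn : 0 < n) :
    ∑ x ∈ Icc 1 (n : ℤ), ∑ j ∈ range l.length, |stepDisp l j x| =
      2 * ∑ j ∈ range l.length, |a (j + 1) - a j| := by
  rw [sum_comm, mul_sum]
  exact sum_congr rfl fun j hj => ha.sum_abs_stepDisp hl hn (mem_range.1 hj)

theorem EndSeq.sub_lt (hn : 2 ≤ n) (hfact : IsFactorization n l) (ha : EndSeq n l a)
    (hk : k < l.length) : a (k + 1) - a k < n := by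
  obtain ⟨hl, hprod⟩ := hfact
  have hchain : IsReflChain n l a := fun k h => (ha k h).2
  have hinc : ∀ j ∈ range l.length, 0 < a (j + 1) - a j := fun j hj =>
    sub_pos.2 (ha j (mem_range.1 hj)).1
  have hrise : 0 < a l.length - a 0 := by
    rw [← sum_range_sub]
    exact sum_pos hinc ⟨k, mem_range.2 hk⟩
  have hlam : lam n (a l.length) = a 0 := by
    rw [← hprod]
    exact hchain.suffixProd_apply hl (Nat.zero_le _)
  have hdvd : (n : ℤ) ∣ a l.length := by
    by_contra h
    rw [lam_of_not_dvd h] at hlam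
    omega
  rw [lam_of_dvd hdvd] at hlam
  have hvar : ∀ x ∈ Icc 1 (n : ℤ), |lam n x - x| = ∑ j ∈ range l.length, |stepDisp l j x| := by
    refine (sum_eq_sum_iff_of_le fun x _ => abs_lam_sub_le_sum_abs_stepDisp hprod x).1 ?_
    rw [sum_abs_lam_sub (by omega), hchain.sum_sum_abs_stepDisp hl (by omega),
      sum_congr rfl fun j hj => abs_of_pos (hinc j hj), sum_range_sub]
    linarith
  obtain ⟨y, hy, hyn, hyk⟩ :=
    hchain.exists_stepDisp_eq hl (by omega) (x := n) (by simpa using hdvd) hk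
  have hnet : lam n y - y = n := by
    rw [lam_of_not_dvd (mt (dvd_iff_eq_of_mem_Icc hy).1 hyn)]
    ring
  have hle : a (k + 1) - a k ≤ n := calc
    a (k + 1) - a k = |stepDisp l k y| := by rw [hyk, abs_of_pos (hinc k (mem_range.2 hk))]
    _ ≤ ∑ j ∈ range l.length, |stepDisp l j y| :=
      single_le_sum (f := fun j => |stepDisp l j y|) (fun _ _ => abs_nonneg _) (mem_range.2 hk)
    _ = n := by rw [← hvar y hy, hnet, abs_of_nonneg (by positivity)]
  have hne : a (k + 1) - a k ≠ n := fun h => hchain.not_dvd_sub hl hk ⟨-1, by linarith⟩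
  exact lt_of_le_of_ne hle hne

end Increasing

section BoundedSteps

variable {n : ℕ} {l : List (ℤ → ℤ)} {a : ℕ → ℤ} {k : ℕ} {x : ℤ}

def moveCount (l : List (ℤ → ℤ)) (x : ℤ) : ℕ := #{k ∈ range l.length | stepDisp l k x ≠ 0}

namespace IsReflChain

lemma sum_moveCount (hl : ∀ t ∈ l, IsAffRefl n t) (ha : IsReflChain n l a) (hn : 0 < n) :
    ∑ x ∈ Icc 1 (n : ℤ), moveCount l x = 2 * l.length := by
  simp only [moveCount, card_filter]
  rw [sum_comm, sum_congr rfl fun j hj => by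
    rw [← card_filter, ha.card_filter_stepDisp_ne_zero hl hn (mem_range.1 hj)]]
  simp [mul_comm]

lemma abs_sum_stepDisp_le (ha : IsReflChain n l a)
    (hsmall : ∀ k < l.length, |a (k + 1) - a k| < n) {s : Finset ℕ} (hs : s ⊆ range l.length)
    (x : ℤ) : |∑ j ∈ s, stepDisp l j x| ≤ #{j ∈ s | stepDisp l j x ≠ 0} * (n - 1) := by
  rw [← nsmul_eq_mul]
  refine abs_sum_le_card_filter_ne_zero_nsmul fun j hj => ?_
  have hj := mem_range.1 (hs hj)
  linarith [ha.abs_stepDisp_le hj (x := x), hsmall j hj]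

lemma abs_lam_sub_le_moveCount_mul (hprod : listProd l = lam n) (ha : IsReflChain n l a)
    (hsmall : ∀ k < l.length, |a (k + 1) - a k| < n) (x : ℤ) :
    |lam n x - x| ≤ moveCount l x * (n - 1) :=
  sum_stepDisp hprod x ▸ ha.abs_sum_stepDisp_le hsmall subset_rfl x

lemma two_le_moveCount (hn : 2 ≤ n) (hprod : listProd l = lam n) (ha : IsReflChain n l a)
    (hsmall : ∀ k < l.length, |a (k + 1) - a k| < n) (x : ℤ) : 2 ≤ moveCount l x := by
  have hbound := ha.abs_lam_sub_le_moveCount_mul hprod hsmall x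
  have hnet := le_abs_lam_sub hn x
  by_contra! h
  have : (moveCount l x : ℤ) ≤ 1 := by exact_mod_cast Nat.le_of_lt_succ h
  nlinarith

lemma moveCount_eq_two (hn : 2 ≤ n) (hfact : IsFactorization n l) (hlen : l.length = 2 * n - 2)
    (ha : IsReflChain n l a) (hsmall : ∀ k < l.length, |a (k + 1) - a k| < n) {x₀ : ℤ}
    (hx₀ : x₀ ∈ Icc 1 (n : ℤ)) (hx₀a : (n : ℤ) ∣ x₀ - a l.length) :
    ∀ x ∈ Icc 1 (n : ℤ), x ≠ x₀ → moveCount l x = 2 := by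
  obtain ⟨hl, hprod⟩ := hfact
  have hx₀count : moveCount l x₀ = l.length := by
    rw [moveCount, filter_true_of_mem fun k hk => ha.stepDisp_ne_zero hl hx₀a (mem_range.1 hk),
      card_range]
  have hrest : ∑ x ∈ (Icc 1 (n : ℤ)).erase x₀, moveCount l x =
      ∑ x ∈ (Icc 1 (n : ℤ)).erase x₀, 2 := by
    have := add_sum_erase _ (moveCount l) hx₀
    rw [ha.sum_moveCount hl (by omega), hx₀count] at this
    rw [sum_const, card_erase_of_mem hx₀, Int.card_Icc, smul_eq_mul]
    simp only [add_sub_cancel_right, Int.toNat_natCast]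
    omega
  intro x hx hxx₀
  exact ((sum_eq_sum_iff_of_le fun x _ => ha.two_le_moveCount hn hprod hsmall x).1
    hrest.symm x (mem_erase.2 ⟨hxx₀, hx⟩)).symm

lemma lt_succ_of_moveCount_eq_two (hfact : IsFactorization n l) (ha : IsReflChain n l a)
    (hsmall : ∀ k < l.length, |a (k + 1) - a k| < n) (hdvd : (n : ℤ) ∣ a l.length)
    (hcount : ∀ x ∈ Icc 1 (n : ℤ), x ≠ n → moveCount l x = 2) (hk : k < l.length) :
    a k < a (k + 1) := by
  obtain ⟨hl, hprod⟩ := hfact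
  have hn : 0 < n := by
    have := (abs_nonneg _).trans_lt (hsmall k hk)
    omega
  obtain ⟨y, hy, hyn, hyk⟩ := ha.exists_stepDisp_eq hl hn (x := n) (by simpa using hdvd) hk
  have hyk0 : stepDisp l k y ≠ 0 := by
    rw [hyk]
    exact fun h => ha.not_dvd_sub hl hk (by simp [show a k = a (k + 1) by linarith])
  have hother : #{j ∈ (range l.length).erase k | stepDisp l j y ≠ 0} = 1 := by
    rw [filter_erase, card_erase_of_mem (mem_filter.2 ⟨mem_range.2 hk, hyk0⟩)]
    have := hcount y hy hyn
    rw [moveCount] at this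
    omega
  have hrest := ha.abs_sum_stepDisp_le hsmall (erase_subset k _) y
  rw [hother, Nat.cast_one, one_mul] at hrest
  have hsplit := add_sum_erase _ (stepDisp l · y) (mem_range.2 hk)
  rw [sum_stepDisp hprod, hyk, lam_of_not_dvd (mt (dvd_iff_eq_of_mem_Icc hy).1 hyn)] at hsplit
  linarith [le_abs_self (∑ j ∈ (range l.length).erase k, stepDisp l j y)]

lemma exists_endSeq_of_two (hfact : IsFactorization 2 l) (hlen : l.length = 2)
    (ha : IsReflChain 2 l a) (hsmall : ∀ k < l.length, |a (k + 1) - a k| < 2)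
    (hodd : ¬ (2 : ℤ) ∣ a 2) : ∃ b, EndSeq 2 l b := by
  obtain ⟨hl, hprod⟩ := hfact
  have hlam : lam 2 (a 2) = a 0 := by
    rw [← hprod, ← hlen]
    exact ha.suffixProd_apply hl (Nat.zero_le _)
  rw [lam_of_not_dvd (by exact_mod_cast hodd)] at hlam
  have h01 : ¬ (2 : ℤ) ∣ a 0 - a 1 := by simpa using ha.not_dvd_sub hl (k := 0) (by omega)
  have h12 : ¬ (2 : ℤ) ∣ a 1 - a 2 := by simpa using ha.not_dvd_sub hl (k := 1) (by omega)
  have hs01 : |a 1 - a 0| < 2 := hsmall 0 (by omega)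
  have hs12 : |a 2 - a 1| < 2 := hsmall 1 (by omega)
  rw [abs_lt] at hs01 hs12
  have ha1 : a 1 = a 0 - 1 := by omega
  have ha2 : a 2 = a 0 - 2 := by omega
  refine ⟨fun k => a 0 - 1 + k, fun k hk => ⟨by simp, ?_⟩⟩
  have hk2 : k < 2 := hlen ▸ hk
  interval_cases k
  · rw [ha 0 hk, ha1, affRefl_comm (by omega)]
    simp
  · rw [ha 1 hk, ha1, ha2, affRefl_comm (by omega), ← affRefl_add_add (d := 2) (by simp)]
    push_cast
    ring_nf

theorem exists_endSeq (hn : 2 ≤ n) (hfact : IsFactorization n l)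
    (hlen : l.length = 2 * n - 2) (ha : IsReflChain n l a)
    (hsmall : ∀ k < l.length, |a (k + 1) - a k| < n) : ∃ b, EndSeq n l b := by
  obtain ⟨x₀, hx₀, hx₀a⟩ := IsAffinePerm.id.exists_mem_Icc_dvd_sub (n := n) (by omega) (a l.length)
  rw [id] at hx₀a
  have hcount := ha.moveCount_eq_two hn hfact hlen hsmall hx₀ hx₀a
  by_cases hx₀n : x₀ = n
  · subst hx₀n
    exact ⟨a, fun k hk => ⟨ha.lt_succ_of_moveCount_eq_two hfact hsmall
      (by simpa using hx₀a) hcount hk, ha k hk⟩⟩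
  have hn2 : n = 2 := by
    have hbound := ha.abs_lam_sub_le_moveCount_mul hfact.2 hsmall n
    rw [lam_of_dvd dvd_rfl, sub_sub_cancel_left, abs_neg, abs_of_nonneg (by nlinarith),
      hcount n (mem_Icc.2 ⟨by omega, le_rfl⟩) (Ne.symm hx₀n), Nat.cast_two] at hbound
    have : (n : ℤ) ≤ 2 := by nlinarith
    omega
  subst hn2
  rw [show l.length = 2 from hlen] at hx₀a
  refine ha.exists_endSeq_of_two hfact (by omega) (fun k hk => by exact_mod_cast hsmall k hk)
    fun h => hx₀n ?_
  exact (dvd_iff_eq_of_mem_Icc hx₀).1 (by simpa using dvd_add hx₀a h)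

end IsReflChain

end BoundedSteps

lemma IsTreeLike.exists_endSeq {n : ℕ} {l : List (ℤ → ℤ)} (h : IsTreeLike n l) :
    ∃ a, EndSeq n l a := by
  obtain ⟨-, -, A, B, hAB⟩ := h
  -- `c k` shifts the `k`-th reflection's endpoints so that consecutive reflections share one
  set c : ℕ → ℤ := fun k => ∑ j ∈ range k, (B (j + 1) - A (j + 1)) with hc
  have hcdvd : ∀ k ≤ l.length, (n : ℤ) ∣ c k := fun k hk => dvd_sum fun j hj =>
    dvd_sub_comm.1 (Int.dvd_of_emod_eq_zero (hAB j (by simp at hj; omega)).2.2)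
  have hcsucc : ∀ k, A (k + 1) + c (k + 1) = B (k + 1) + c k := fun k => by
    simp only [hc, sum_range_succ]
    ring
  refine ⟨fun k => A k + c k, fun k hk => ⟨?_, ?_⟩⟩
  · simp only [hcsucc]
    linarith [(hAB k hk).2.1]
  · simp only [hcsucc, (hAB k hk).1, affRefl_add_add (hcdvd k hk.le)]

lemma EndSeq.isTreeLike {n : ℕ} {l : List (ℤ → ℤ)} {a : ℕ → ℤ} (hfact : IsFactorization n l)
    (hlen : l.length = 2 * n - 2) (ha : EndSeq n l a) : IsTreeLike n l :=
  ⟨hfact, hlen, a, a, fun k h => ⟨(ha k h).2, (ha k h).1, by simp⟩⟩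

/-- A factorization of `λₙ` into `2n-2` affine reflections is tree-like
iff there are integers `a₀, …, a_{2n-2}` with `r_ℓ = ((a_{ℓ-1}, a_ℓ))` and
`|a_ℓ - a_{ℓ-1}| < n` for every `ℓ`. -/
theorem stmt2 (n : ℕ) (hn : 2 ≤ n) (l : List (ℤ → ℤ))
    (hfact : IsFactorization n l) (hlen : l.length = 2 * n - 2) :
    IsTreeLike n l ↔
      ∃ a : ℕ → ℤ, ∀ k : ℕ, ∀ h : k < l.length,
        l.get ⟨k, h⟩ = affRefl n (a k) (a (k + 1)) ∧ |a (k + 1) - a k| < (n : ℤ) := by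
  constructor
  · intro htl
    obtain ⟨a, ha⟩ := htl.exists_endSeq
    exact ⟨a, fun k h => ⟨(ha k h).2,
      by rw [abs_of_pos (sub_pos.2 (ha k h).1)]; exact ha.sub_lt hn hfact h⟩⟩
  · rintro ⟨a, ha⟩
    obtain ⟨b, hb⟩ := IsReflChain.exists_endSeq hn hfact hlen (fun k h => (ha k h).1)
      fun k h => (ha k h).2
    exact hb.isTreeLike hfact hlen
end
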